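/- Let u : ℝⁿ → ℝ be a C² function with |∇u(x)| < 1 for all x, satisfying the f-maximal graph equation div(∇u/√(1 − |∇u|²))(x) = ⟨x, ∇u(x)⟩/√(1 − |∇u(x)|²) for all x ∈ ℝⁿ. Define the vector field V : ℝ^{n+1} → ℝ^{n+1} by V(x, t) = e^{-|x|²/2} · (∇u(x), 1)/√(1 − |∇u(x)|²) (the weighted extension of the future-directed unit timelike normal of the graph of u by translations along the t-axis). Then the Euclidean divergence of V on ℝ^{n+1} vanishes identically: div V(x, t) = 0 for all (x, t) ∈ ℝ^{n+1}. -/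

import Mathlib

open scoped RealInnerProductSpace

/-- Euclidean divergence of a vector field on `ℝⁿ`. -/
noncomputable def ediv {n : ℕ} (F : EuclideanSpace ℝ (Fin n) → EuclideanSpace ℝ (Fin n))
    (x : EuclideanSpace ℝ (Fin n)) : ℝ :=
  ∑ i, fderiv ℝ (fun y => F y i) x (EuclideanSpace.single i 1)

/-- Euclidean divergence of a vector field on `ℝⁿ × ℝ = ℝ^{n+1}`. -/
noncomputable def pdiv {n : ℕ}
    (F : EuclideanSpace ℝ (Fin n) × ℝ → EuclideanSpace ℝ (Fin n) × ℝ)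
    (p : EuclideanSpace ℝ (Fin n) × ℝ) : ℝ :=
  (∑ i, fderiv ℝ (fun q => (F q).1 i) p (EuclideanSpace.single i 1, 0))
    + fderiv ℝ (fun q => (F q).2) p (0, 1)

/-!
The field `V` does not depend on `t`, so its divergence on `ℝ^{n+1}` is the divergence on `ℝⁿ` of
`ρ N`, where `ρ x = e^{-|x|²/2}` and `N = ∇u / √(1 - |∇u|²)`. Since `∇ρ = -ρ x`, the product rule
gives `div (ρ N) = ρ (div N - ⟨x, N⟩)`, which vanishes by the `f`-maximal graph equation.
-/

theorem fderiv_comp_fst_apply {E F G : Type*} [NormedAddCommGroup E] [NormedSpace ℝ E]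
    [NormedAddCommGroup F] [NormedSpace ℝ F] [NormedAddCommGroup G] [NormedSpace ℝ G]
    {h : E → G} {p : E × F} (hh : DifferentiableAt ℝ h p.1) (v : E) (w : F) :
    fderiv ℝ (fun q : E × F => h q.1) p (v, w) = fderiv ℝ h p.1 v := by
  have hcomp : HasFDerivAt (fun q : E × F => h q.1)
      ((fderiv ℝ h p.1).comp (ContinuousLinearMap.fst ℝ E F)) p :=
    hh.hasFDerivAt.comp p hasFDerivAt_fst
  rw [hcomp.fderiv]
  rfl

theorem hasFDerivAt_exp_neg_norm_sq_div_two {E : Type*} [NormedAddCommGroup E]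
    [InnerProductSpace ℝ E] (x : E) :
    HasFDerivAt (fun y : E => Real.exp (-‖y‖ ^ 2 / 2))
      (-Real.exp (-‖x‖ ^ 2 / 2) • innerSL ℝ x) x := by
  convert ((hasStrictFDerivAt_norm_sq x).hasFDerivAt.mul_const (-(1 / 2) : ℝ)).exp using 1
  · ext y; ring_nf
  · ext v; simp [div_eq_mul_inv]

theorem ContDiff.differentiable_gradient {F : Type*} [NormedAddCommGroup F]
    [InnerProductSpace ℝ F] [CompleteSpace F] {u : F → ℝ} (hu : ContDiff ℝ 2 u) :
    Differentiable ℝ (gradient u) :=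
  (InnerProductSpace.toDual ℝ F).symm.differentiable.comp
    ((hu.fderiv_right le_rfl).differentiable one_ne_zero)

theorem DifferentiableAt.inv_sqrt_one_sub_norm_sq {E F : Type*} [NormedAddCommGroup E]
    [NormedSpace ℝ E] [NormedAddCommGroup F] [InnerProductSpace ℝ F] {g : E → F} {x : E}
    (hg : DifferentiableAt ℝ g x) (hx : ‖g x‖ < 1) :
    DifferentiableAt ℝ (fun y => (Real.sqrt (1 - ‖g y‖ ^ 2))⁻¹) x := by
  have hpos : 0 < 1 - ‖g x‖ ^ 2 := by nlinarith [norm_nonneg (g x)]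
  exact (((differentiableAt_const (1 : ℝ)).sub (hg.norm_sq ℝ)).sqrt hpos.ne').inv
    (Real.sqrt_pos.2 hpos).ne'

section Divergence

variable {n : ℕ}

theorem ediv_smul {ρ : EuclideanSpace ℝ (Fin n) → ℝ}
    {F : EuclideanSpace ℝ (Fin n) → EuclideanSpace ℝ (Fin n)} {x : EuclideanSpace ℝ (Fin n)}
    (hρ : DifferentiableAt ℝ ρ x) (hF : DifferentiableAt ℝ F x) :
    ediv (fun y => ρ y • F y) x = ρ x * ediv F x + fderiv ℝ ρ x (F x) := by
  have hexpand :
      fderiv ℝ ρ x (F x) = ∑ i, F x i * fderiv ℝ ρ x (EuclideanSpace.single i 1) := by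
    conv_lhs => rw [← (EuclideanSpace.basisFun (Fin n) ℝ).sum_repr (F x)]
    simp [map_sum]
  simp only [ediv, PiLp.smul_apply, smul_eq_mul,
    fderiv_fun_mul hρ (differentiableAt_euclidean.1 hF _), add_apply, smul_apply,
    Finset.sum_add_distrib, Finset.mul_sum, hexpand]

theorem pdiv_fst_eq_ediv {G : EuclideanSpace ℝ (Fin n) → EuclideanSpace ℝ (Fin n)}
    {c : EuclideanSpace ℝ (Fin n) → ℝ} {p : EuclideanSpace ℝ (Fin n) × ℝ}
    (hG : DifferentiableAt ℝ G p.1) (hc : DifferentiableAt ℝ c p.1) :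
    pdiv (fun q => (G q.1, c q.1)) p = ediv G p.1 := by
  simp only [pdiv, ediv, fderiv_comp_fst_apply (differentiableAt_euclidean.1 hG _),
    fderiv_comp_fst_apply hc, map_zero, add_zero]

end Divergence

theorem weighted_normal_divergence_free_general (n : ℕ)
    (u : EuclideanSpace ℝ (Fin n) → ℝ) (hu : ContDiff ℝ 2 u)
    (hgrad : ∀ x, ‖gradient u x‖ < 1)
    (hmax : ∀ x, ediv (fun y => (Real.sqrt (1 - ‖gradient u y‖ ^ 2))⁻¹ • gradient u y) x
        = ⟪x, gradient u x⟫ / Real.sqrt (1 - ‖gradient u x‖ ^ 2))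
    (V : EuclideanSpace ℝ (Fin n) × ℝ → EuclideanSpace ℝ (Fin n) × ℝ)
    (hV : ∀ x t, V (x, t)
        = (Real.exp (-‖x‖ ^ 2 / 2) / Real.sqrt (1 - ‖gradient u x‖ ^ 2))
            • (gradient u x, (1 : ℝ))) :
    ∀ p, pdiv V p = 0 := by
  set ρ : EuclideanSpace ℝ (Fin n) → ℝ := fun x => Real.exp (-‖x‖ ^ 2 / 2)
  set γ : EuclideanSpace ℝ (Fin n) → ℝ := fun y => (Real.sqrt (1 - ‖gradient u y‖ ^ 2))⁻¹
  set N : EuclideanSpace ℝ (Fin n) → EuclideanSpace ℝ (Fin n) := fun y => γ y • gradient u y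
  have hρ (x) : HasFDerivAt ρ (-ρ x • innerSL ℝ x) x := hasFDerivAt_exp_neg_norm_sq_div_two x
  have hγ (x) : DifferentiableAt ℝ γ x :=
    (hu.differentiable_gradient x).inv_sqrt_one_sub_norm_sq (hgrad x)
  have hN (x) : DifferentiableAt ℝ N x := (hγ x).smul (hu.differentiable_gradient x)
  have hVeq : V = fun q => (ρ q.1 • N q.1, ρ q.1 * γ q.1) := by
    funext ⟨x, t⟩
    rw [hV]
    ext <;> simp [ρ, N, γ, smul_smul, div_eq_mul_inv]
  rintro ⟨x, t⟩
  rw [hVeq, pdiv_fst_eq_ediv (G := fun y => ρ y • N y) (c := fun y => ρ y * γ y)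
    ((hρ x).differentiableAt.smul (hN x)) ((hρ x).differentiableAt.mul (hγ x)),
    ediv_smul (hρ x).differentiableAt (hN x), hmax, (hρ x).fderiv]
  simp [N, γ]
  ring

/-- For a `C²` solution `u` of the `f`-maximal graph equation with `|∇u| < 1`, the weighted
extension `V(x,t) = e^{-|x|²/2} (∇u(x),1)/√(1-|∇u(x)|²)` of the future-directed unit
timelike normal has vanishing Euclidean divergence on `ℝ^{n+1}`. -/
theorem weighted_normal_divergence_free (n : ℕ) (hn : 1 ≤ n)
    (u : EuclideanSpace ℝ (Fin n) → ℝ) (hu : ContDiff ℝ 2 u)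
    (hgrad : ∀ x, ‖gradient u x‖ < 1)
    (hmax : ∀ x, ediv (fun y => (Real.sqrt (1 - ‖gradient u y‖ ^ 2))⁻¹ • gradient u y) x
        = ⟪x, gradient u x⟫ / Real.sqrt (1 - ‖gradient u x‖ ^ 2))
    (V : EuclideanSpace ℝ (Fin n) × ℝ → EuclideanSpace ℝ (Fin n) × ℝ)
    (hV : ∀ x t, V (x, t)
        = (Real.exp (-‖x‖ ^ 2 / 2) / Real.sqrt (1 - ‖gradient u x‖ ^ 2))
            • (gradient u x, (1 : ℝ))) :
    ∀ p, pdiv V p = 0 :=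
  weighted_normal_divergence_free_general n u hu hgrad hmax V hV
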